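/- Let S be a connected Riemann surface and u : S → W a J-holomorphic map into an almost complex manifold (W, J). If the set of critical points of u has an accumulation point in the interior of S, then u is constant. -/
import Mathlib

open Filter Metric Set

theorem stmt11_aux {E : Type*} [NormedAddCommGroup E] [NormedSpace ℂ E] [CompleteSpace E]
    {U : Set ℂ} (hU : IsOpen U) (hconn : IsConnected U)
    (f : ℂ → E) (hf : DifferentiableOn ℂ f U)
    (z₀ : ℂ) (hz₀ : z₀ ∈ U)
    (hacc : z₀ ∈ closure (({z ∈ U | fderiv ℂ f z = 0} \ {z₀}))) :
    ∀ x ∈ U, ∀ y ∈ U, f x = f y := by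
  have hfa : AnalyticOnNhd ℂ f U := hf.analyticOnNhd hU
  have hga : AnalyticOnNhd ℂ (fderiv ℂ f) U := hfa.fderiv
  have hfreq : ∃ᶠ z in nhdsWithin z₀ {z₀}ᶜ, fderiv ℂ f z = 0 := by
    have h := mem_closure_iff_frequently.mp hacc
    rw [frequently_nhdsWithin_iff]
    exact h.mono fun z hz => ⟨hz.1.2, hz.2⟩
  have hg0 : ∀ z ∈ U, fderiv ℂ f z = 0 :=
    fun z hz => hga.eqOn_zero_of_preconnected_of_frequently_eq_zero
      hconn.isPreconnected hz₀ hfreq hz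
  obtain ⟨r, hr, hball⟩ := Metric.isOpen_iff.mp hU z₀ hz₀
  have hconst_ball : ∀ z ∈ ball z₀ r, f z = f z₀ := by
    intro z hz
    have hdiff : DifferentiableOn ℂ f (ball z₀ r) := hf.mono hball
    refine (convex_ball z₀ r).is_const_of_fderivWithin_eq_zero hdiff ?_ hz (mem_ball_self hr)
    intro w hw
    rw [fderivWithin_eq_fderiv (isOpen_ball.uniqueDiffOn w hw)
      ((hf w (hball hw)).differentiableAt (hU.mem_nhds (hball hw)))]
    exact hg0 w (hball hw)
  have hev : f =ᶠ[nhds z₀] (fun _ => f z₀) :=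
    Filter.eventuallyEq_of_mem (ball_mem_nhds z₀ hr) hconst_ball
  have hconstU : EqOn f (fun _ => f z₀) U :=
    hfa.eqOn_of_preconnected_of_eventuallyEq (analyticOnNhd_const)
      hconn.isPreconnected hz₀ hev
  intro x hx y hy
  rw [hconstU hx, hconstU hy]

/-- McDuff–Salamon, Lemma 2.4.1, integrable local model: let `U ⊆ ℂ` be
an open connected set (a local model for a connected Riemann surface) and `f : ℂ → E`
a holomorphic map into a complex Banach space (a local model for a holomorphic map of
complex manifolds).  If the set of critical points of `f` in `U` (points where the
differential vanishes) has an accumulation point `z₀ ∈ U`, then `f` is constant on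
`U`. -/
theorem stmt11 {E : Type*} [NormedAddCommGroup E] [NormedSpace ℂ E]
    {U : Set ℂ} (hU : IsOpen U) (hconn : IsConnected U)
    (f : ℂ → E) (hf : DifferentiableOn ℂ f U)
    (z₀ : ℂ) (hz₀ : z₀ ∈ U)
    (hacc : z₀ ∈ closure (({z ∈ U | fderiv ℂ f z = 0} \ {z₀}))) :
    ∀ x ∈ U, ∀ y ∈ U, f x = f y := by
  set e : E →L[ℂ] UniformSpace.Completion E := UniformSpace.Completion.toComplL
  have hinj : Function.Injective e := UniformSpace.Completion.coe_injective E
  have hg : DifferentiableOn ℂ (e ∘ f) U := e.differentiable.comp_differentiableOn hf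
  have hsub : ({z ∈ U | fderiv ℂ f z = 0} \ {z₀}) ⊆
      ({z ∈ U | fderiv ℂ (e ∘ f) z = 0} \ {z₀}) := by
    rintro z ⟨⟨hzU, hz0⟩, hzne⟩
    have hfz : DifferentiableAt ℂ f z := (hf z hzU).differentiableAt (hU.mem_nhds hzU)
    refine ⟨⟨hzU, ?_⟩, hzne⟩
    rw [fderiv_comp z e.differentiable.differentiableAt hfz, e.fderiv, hz0,
      ContinuousLinearMap.comp_zero]
  have := stmt11_aux hU hconn (e ∘ f) hg z₀ hz₀ (closure_mono hsub hacc)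
  intro x hx y hy
  exact hinj (this x hx y hy)
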